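/- Every orthonormal basis of ℂ² ⊗ ℂ² consisting of product vectors is one-way implementable: if {v₁, v₂, v₃, v₄} is an orthonormal basis of ℂ² ⊗ ℂ² with each v_k = a_k ⊗ b_k a product vector, then, possibly after exchanging the two tensor factors, there exist an orthonormal basis {f₁, f₂} of the first factor ℂ² and orthonormal bases {g₁^{(1)}, g₂^{(1)}} and {g₁^{(2)}, g₂^{(2)}} of the second factor such that the basis is, up to phases, {f₁ ⊗ g₁^{(1)}, f₁ ⊗ g₂^{(1)}, f₂ ⊗ g₁^{(2)}, f₂ ⊗ g₂^{(2)}}. -/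

import Mathlib

/-!
Write `v k = a k ⊗ b k`. Orthonormality gives `⟪a k, a l⟫ * ⟪b k, b l⟫ = δ k l`, so every `a k`,
`b k` is nonzero and for `k ≠ l` either `a k ⊥ a l` or `b k ⊥ b l`. In dimension two, vectors
orthogonal to the same nonzero vector are parallel, so no three nonzero vectors are pairwise
orthogonal. Two of the pairs `(0, l)` have the same type, say `a 0 ⊥ a 2` and `a 0 ⊥ a 3` after
relabelling. Then `a 2 ∥ a 3`, which forces `b 2 ⊥ b 3`. If `a 3 ⊥ a 1`, then `a 1 ∥ a 0` and the
`a k` lie two by two on the orthogonal lines through `a 0` and `a 2`; otherwise `b 1`, `b 2`, `b 3`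
would be pairwise orthogonal. Finally, if `a k = t k • f i` for an orthonormal pair `f`, the vectors
`t k • b k` with the same `i` are orthonormal, since their inner products are
`⟪a k, a l⟫ * ⟪b k, b l⟫`.
-/

open Module Submodule WithLp
open scoped InnerProductSpace EuclideanSpace

section InnerProductSpace

variable {𝕜 E F : Type*} [RCLike 𝕜] [NormedAddCommGroup E] [InnerProductSpace 𝕜 E]
  [NormedAddCommGroup F] [InnerProductSpace 𝕜 F]

theorem inner_ne_zero_of_mem_span_singleton {x y : E} (hx : x ≠ 0) (h : x ∈ 𝕜 ∙ y) :
    ⟪x, y⟫_𝕜 ≠ 0 := by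
  obtain ⟨c, rfl⟩ := mem_span_singleton.1 h
  rw [inner_smul_left]
  exact mul_ne_zero (by simpa using left_ne_zero_of_smul hx)
    (inner_self_ne_zero.2 (right_ne_zero_of_smul hx))

theorem inner_eq_zero_of_mem_span_singleton {x y z : E} (h : x ∈ 𝕜 ∙ y)
    (hyz : ⟪y, z⟫_𝕜 = 0) : ⟪x, z⟫_𝕜 = 0 := by
  obtain ⟨c, rfl⟩ := mem_span_singleton.1 h
  rw [inner_smul_left, hyz, mul_zero]

theorem orthonormal_inv_norm_smul {ι : Type*} {v : ι → E} (hv : ∀ i, v i ≠ 0)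
    (h : Pairwise fun i j => ⟪v i, v j⟫_𝕜 = 0) :
    Orthonormal 𝕜 fun i => (‖v i‖⁻¹ : 𝕜) • v i := by
  refine ⟨fun i => norm_smul_inv_norm (hv i), fun i j hij => ?_⟩
  simp only [inner_smul_left, inner_smul_right, h hij, mul_zero]

theorem orthonormal_smul_of_inner_mul_inner_eq_ite {ι I J : Type*} [DecidableEq ι]
    {a : ι → E} {b : ι → F} (e : ι ≃ I × J) {f : I → E} (hf : Orthonormal 𝕜 f)
    {t : ι → 𝕜} (ht : ∀ k, t k • f (e k).1 = a k)
    (hab : ∀ k l, ⟪a k, a l⟫_𝕜 * ⟪b k, b l⟫_𝕜 = if k = l then 1 else 0) (i : I) :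
    Orthonormal 𝕜 fun j => t (e.symm (i, j)) • b (e.symm (i, j)) := by
  classical
  rw [orthonormal_iff_ite]
  intro j l
  have hf1 : ⟪f i, f i⟫_𝕜 = 1 := by simpa using orthonormal_iff_ite.1 hf i i
  calc ⟪t (e.symm (i, j)) • b (e.symm (i, j)), t (e.symm (i, l)) • b (e.symm (i, l))⟫_𝕜
      = ⟪t (e.symm (i, j)) • f i, t (e.symm (i, l)) • f i⟫_𝕜
          * ⟪b (e.symm (i, j)), b (e.symm (i, l))⟫_𝕜 := by
        simp only [inner_smul_left, inner_smul_right, hf1]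
        ring
    _ = ⟪a (e.symm (i, j)), a (e.symm (i, l))⟫_𝕜
          * ⟪b (e.symm (i, j)), b (e.symm (i, l))⟫_𝕜 := by
        rw [← ht, ← ht, e.apply_symm_apply, e.apply_symm_apply]
    _ = if j = l then 1 else 0 := by simp [hab]

variable (𝕜) in
def IsSplitByOrthonormalPair {ι : Type*} (a : ι → E) : Prop :=
  ∃ (e : ι ≃ Fin 2 × Fin 2) (f : Fin 2 → E), Orthonormal 𝕜 f ∧ ∀ k, a k ∈ 𝕜 ∙ f (e k).1

theorem IsSplitByOrthonormalPair.of_comp {ι ι' : Type*} {a : ι → E} (π : ι' ≃ ι)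
    (h : IsSplitByOrthonormalPair 𝕜 (a ∘ π)) : IsSplitByOrthonormalPair 𝕜 a := by
  obtain ⟨e, f, hf, ha⟩ := h
  exact ⟨π.symm.trans e, f, hf, fun k => by simpa using ha (π.symm k)⟩

theorem isSplitByOrthonormalPair_of_mem_span {a : Fin 4 → E} {u w : E} (hu : u ≠ 0)
    (hw : w ≠ 0) (huw : ⟪u, w⟫_𝕜 = 0) (h0 : a 0 ∈ 𝕜 ∙ u) (h1 : a 1 ∈ 𝕜 ∙ u)
    (h2 : a 2 ∈ 𝕜 ∙ w) (h3 : a 3 ∈ 𝕜 ∙ w) : IsSplitByOrthonormalPair 𝕜 a := by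
  set v : Fin 2 → E := ![u, w]
  have hv : ∀ i, v i ≠ 0 := Fin.forall_fin_two.2 ⟨hu, hw⟩
  have horth : Pairwise fun i j => ⟪v i, v j⟫_𝕜 = 0 := by
    intro i j hij
    fin_cases i <;> fin_cases j <;> simp_all [v, inner_eq_zero_symm]
  -- `finProdFinEquiv.symm` sends `k` to `(k / 2, k % 2)`.
  refine ⟨(finProdFinEquiv (m := 2) (n := 2)).symm, _, orthonormal_inv_norm_smul hv horth,
    fun k => ?_⟩
  rw [span_singleton_smul_eq (by simpa using hv _)]
  fin_cases k <;> assumption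

variable [Fact (finrank 𝕜 E = 2)] [Fact (finrank 𝕜 F = 2)]

theorem inner_ne_zero_of_inner_eq_zero_of_inner_eq_zero {x y z : E}
    (hx : x ≠ 0) (hy : y ≠ 0) (hz : z ≠ 0)
    (hxy : ⟪x, y⟫_𝕜 = 0) (hxz : ⟪x, z⟫_𝕜 = 0) : ⟪y, z⟫_𝕜 ≠ 0 := fun hyz =>
  inner_ne_zero_of_mem_span_singleton hz
    (mem_span_singleton_of_inner_eq_zero_of_inner_eq_zero hx hy hxz hxy)
    (inner_eq_zero_symm.1 hyz)

theorem isSplitByOrthonormalPair_of_inner_zero_two_of_inner_zero_three {a : Fin 4 → E}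
    {b : Fin 4 → F} (ha : ∀ k, a k ≠ 0) (hb : ∀ k, b k ≠ 0)
    (hab : ∀ k l, k ≠ l → ⟪a k, a l⟫_𝕜 = 0 ∨ ⟪b k, b l⟫_𝕜 = 0)
    (h02 : ⟪a 0, a 2⟫_𝕜 = 0) (h03 : ⟪a 0, a 3⟫_𝕜 = 0) : IsSplitByOrthonormalPair 𝕜 a := by
  have h32 : a 3 ∈ 𝕜 ∙ a 2 :=
    mem_span_singleton_of_inner_eq_zero_of_inner_eq_zero (ha 0) (ha 2) h03 h02
  have hb23 : ⟪b 2, b 3⟫_𝕜 = 0 := (hab 2 3 (by decide)).resolve_left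
    (by rw [← inner_eq_zero_symm]; exact inner_ne_zero_of_mem_span_singleton (ha 3) h32)
  by_cases h31 : ⟪a 3, a 1⟫_𝕜 = 0
  · exact isSplitByOrthonormalPair_of_mem_span (ha 0) (ha 2) h02 (mem_span_singleton_self _)
      (mem_span_singleton_of_inner_eq_zero_of_inner_eq_zero (ha 3) (ha 0) h31
        (inner_eq_zero_symm.1 h03)) (mem_span_singleton_self _) h32
  · have hb31 : ⟪b 3, b 1⟫_𝕜 = 0 := (hab 3 1 (by decide)).resolve_left h31
    have hb21 : ⟪b 2, b 1⟫_𝕜 = 0 := (hab 2 1 (by decide)).resolve_left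
      fun h21 => h31 (inner_eq_zero_of_mem_span_singleton h32 h21)
    exact (inner_ne_zero_of_inner_eq_zero_of_inner_eq_zero (hb 2) (hb 3) (hb 1)
      hb23 hb21 hb31).elim

theorem exists_perm_fin_four_fixing_zero (j k : Fin 4) (hj : j ≠ 0) (hk : k ≠ 0)
    (hjk : j ≠ k) : ∃ π : Equiv.Perm (Fin 4), π 0 = 0 ∧ π 2 = j ∧ π 3 = k := by
  revert j k
  decide

theorem isSplitByOrthonormalPair_of_inner_eq_zero {a : Fin 4 → E} {b : Fin 4 → F}
    (ha : ∀ k, a k ≠ 0) (hb : ∀ k, b k ≠ 0)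
    (hab : ∀ k l, k ≠ l → ⟪a k, a l⟫_𝕜 = 0 ∨ ⟪b k, b l⟫_𝕜 = 0) {j k : Fin 4} (hj : j ≠ 0)
    (hk : k ≠ 0) (hjk : j ≠ k) (h0j : ⟪a 0, a j⟫_𝕜 = 0) (h0k : ⟪a 0, a k⟫_𝕜 = 0) :
    IsSplitByOrthonormalPair 𝕜 a := by
  obtain ⟨π, hπ0, hπ2, hπ3⟩ := exists_perm_fin_four_fixing_zero j k hj hk hjk
  refine .of_comp π (isSplitByOrthonormalPair_of_inner_zero_two_of_inner_zero_three
    (b := b ∘ π) (fun _ => ha _) (fun _ => hb _)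
    (fun k l hkl => hab _ _ (π.injective.ne hkl)) ?_ ?_)
  · simpa [hπ0, hπ2] using h0j
  · simpa [hπ0, hπ3] using h0k

theorem isSplitByOrthonormalPair_or_of_inner_eq_zero {a : Fin 4 → E} {b : Fin 4 → F}
    (ha : ∀ k, a k ≠ 0) (hb : ∀ k, b k ≠ 0)
    (hab : ∀ k l, k ≠ l → ⟪a k, a l⟫_𝕜 = 0 ∨ ⟪b k, b l⟫_𝕜 = 0) (h01 : ⟪a 0, a 1⟫_𝕜 = 0) :
    IsSplitByOrthonormalPair 𝕜 a ∨ IsSplitByOrthonormalPair 𝕜 b := by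
  have hba : ∀ k l, k ≠ l → ⟪b k, b l⟫_𝕜 = 0 ∨ ⟪a k, a l⟫_𝕜 = 0 :=
    fun k l hkl => (hab k l hkl).symm
  rcases hab 0 2 (by decide) with h02 | hb02
  · exact .inl (isSplitByOrthonormalPair_of_inner_eq_zero ha hb hab
      (by decide) (by decide) (by decide) h01 h02)
  rcases hab 0 3 (by decide) with h03 | hb03
  · exact .inl (isSplitByOrthonormalPair_of_inner_eq_zero ha hb hab
      (by decide) (by decide) (by decide) h01 h03)
  · exact .inr (isSplitByOrthonormalPair_of_inner_eq_zero hb ha hba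
      (by decide) (by decide) (by decide) hb02 hb03)

theorem isSplitByOrthonormalPair_or {a : Fin 4 → E} {b : Fin 4 → F}
    (ha : ∀ k, a k ≠ 0) (hb : ∀ k, b k ≠ 0)
    (hab : ∀ k l, k ≠ l → ⟪a k, a l⟫_𝕜 = 0 ∨ ⟪b k, b l⟫_𝕜 = 0) :
    IsSplitByOrthonormalPair 𝕜 a ∨ IsSplitByOrthonormalPair 𝕜 b := by
  rcases hab 0 1 (by decide) with h01 | h01
  · exact isSplitByOrthonormalPair_or_of_inner_eq_zero ha hb hab h01
  · exact (isSplitByOrthonormalPair_or_of_inner_eq_zero hb ha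
      (fun k l hkl => (hab k l hkl).symm) h01).symm

end InnerProductSpace

theorem star_dotProduct_tensor {R ι κ : Type*} [CommSemiring R] [StarRing R] [Fintype ι]
    [Fintype κ] (a a' : ι → R) (b b' : κ → R) :
    star (fun p : ι × κ => a p.1 * b p.2) ⬝ᵥ (fun p => a' p.1 * b' p.2) =
      (star a ⬝ᵥ a') * (star b ⬝ᵥ b') := by
  simp only [dotProduct, Pi.star_apply, star_mul', Fintype.sum_prod_type, Finset.sum_mul_sum]
  exact Finset.sum_congr rfl fun _ _ => Finset.sum_congr rfl fun _ _ => by ring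

theorem EuclideanSpace.star_dotProduct_eq_ite {𝕜 ι n : Type*} [RCLike 𝕜] [Fintype n]
    [DecidableEq ι] {f : ι → EuclideanSpace 𝕜 n} (hf : Orthonormal 𝕜 f) (i j : ι) :
    star (f i).ofLp ⬝ᵥ (f j).ofLp = if i = j then 1 else 0 := by
  rw [dotProduct_comm, ← EuclideanSpace.inner_eq_star_dotProduct, orthonormal_iff_ite.1 hf]

theorem exists_orthonormal_factors_of_isSplitByOrthonormalPair {𝕜 ι n m : Type*} [RCLike 𝕜]
    [DecidableEq ι] [Fintype n] [Fintype m] {a : ι → n → 𝕜} {b : ι → m → 𝕜}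
    (hab : ∀ k l, ⟪toLp 2 (a k), toLp 2 (a l)⟫_𝕜 * ⟪toLp 2 (b k), toLp 2 (b l)⟫_𝕜 =
      if k = l then 1 else 0)
    (ha : IsSplitByOrthonormalPair 𝕜 fun k => toLp 2 (a k)) :
    ∃ (f : Fin 2 → n → 𝕜) (g : Fin 2 → Fin 2 → m → 𝕜) (σ : ι ≃ Fin 2 × Fin 2),
      (∀ i j, star (f i) ⬝ᵥ f j = if i = j then 1 else 0) ∧
      (∀ i j l, star (g i j) ⬝ᵥ g i l = if j = l then 1 else 0) ∧
      ∀ k p q, a k p * b k q = f (σ k).1 p * g (σ k).1 (σ k).2 q := by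
  obtain ⟨e, f, hf, hspan⟩ := ha
  choose t ht using fun k => mem_span_singleton.1 (hspan k)
  refine ⟨fun i => (f i).ofLp, fun i j => t (e.symm (i, j)) • b (e.symm (i, j)), e,
    EuclideanSpace.star_dotProduct_eq_ite hf, fun i => EuclideanSpace.star_dotProduct_eq_ite
      (orthonormal_smul_of_inner_mul_inner_eq_ite e hf ht hab i), fun k p q => ?_⟩
  have hak : a k p = t k * f (e k).1 p := by
    simpa using congrArg (fun x : WithLp 2 (n → 𝕜) => x.ofLp p) (ht k).symm
  simp [hak, mul_assoc, mul_left_comm]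

theorem product_basis_two_qubits_one_way_implementable
    (v : Fin 4 → (Fin 2 × Fin 2 → ℂ))
    (hv : ∀ k l, star (v k) ⬝ᵥ v l = if k = l then 1 else 0)
    (hprod : ∀ k, ∃ (a b : Fin 2 → ℂ), ∀ p, v k p = a p.1 * b p.2) :
    (∃ (f : Fin 2 → (Fin 2 → ℂ)) (g : Fin 2 → Fin 2 → (Fin 2 → ℂ))
        (σ : Fin 4 ≃ Fin 2 × Fin 2) (c : Fin 4 → ℂ),
      (∀ i j, star (f i) ⬝ᵥ f j = if i = j then 1 else 0) ∧
      (∀ i j l, star (g i j) ⬝ᵥ g i l = if j = l then 1 else 0) ∧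
      (∀ k, ‖c k‖ = 1) ∧
      (∀ k p, v k p = c k * (f (σ k).1 p.1 * g (σ k).1 (σ k).2 p.2)))
    ∨
    (∃ (f : Fin 2 → (Fin 2 → ℂ)) (g : Fin 2 → Fin 2 → (Fin 2 → ℂ))
        (σ : Fin 4 ≃ Fin 2 × Fin 2) (c : Fin 4 → ℂ),
      (∀ i j, star (f i) ⬝ᵥ f j = if i = j then 1 else 0) ∧
      (∀ i j l, star (g i j) ⬝ᵥ g i l = if j = l then 1 else 0) ∧
      (∀ k, ‖c k‖ = 1) ∧
      (∀ k p, v k p = c k * (f (σ k).1 p.2 * g (σ k).1 (σ k).2 p.1))) := by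
  choose a b hab using hprod
  have hinner : ∀ k l, ⟪toLp 2 (a k), toLp 2 (a l)⟫_ℂ * ⟪toLp 2 (b k), toLp 2 (b l)⟫_ℂ =
      if k = l then 1 else 0 := by
    intro k l
    rw [EuclideanSpace.inner_toLp_toLp, EuclideanSpace.inner_toLp_toLp, dotProduct_comm (a l),
      dotProduct_comm (b l), ← star_dotProduct_tensor, ← funext (hab k), ← funext (hab l), hv]
  have hne : ∀ k, toLp 2 (a k) ≠ 0 ∧ toLp 2 (b k) ≠ 0 := fun k => by
    have h := hinner k k
    rw [if_pos rfl] at h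
    exact ⟨inner_self_ne_zero.1 (left_ne_zero_of_mul_eq_one h),
      inner_self_ne_zero.1 (right_ne_zero_of_mul_eq_one h)⟩
  have hor : ∀ k l, k ≠ l →
      ⟪toLp 2 (a k), toLp 2 (a l)⟫_ℂ = 0 ∨ ⟪toLp 2 (b k), toLp 2 (b l)⟫_ℂ = 0 :=
    fun k l hkl => mul_eq_zero.1 (by rw [hinner, if_neg hkl])
  rcases isSplitByOrthonormalPair_or (fun k => (hne k).1) (fun k => (hne k).2) hor with hA | hB
  · obtain ⟨f, g, σ, hf, hg, hfg⟩ := exists_orthonormal_factors_of_isSplitByOrthonormalPair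
      hinner hA
    exact .inl ⟨f, g, σ, 1, hf, hg, fun _ => norm_one,
      fun k p => by rw [hab, hfg, Pi.one_apply, one_mul]⟩
  · obtain ⟨f, g, σ, hf, hg, hfg⟩ := exists_orthonormal_factors_of_isSplitByOrthonormalPair
      (fun k l => (mul_comm _ _).trans (hinner k l)) hB
    exact .inr ⟨f, g, σ, 1, hf, hg, fun _ => norm_one,
      fun k p => by rw [hab, mul_comm, hfg, Pi.one_apply, one_mul]⟩
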